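/- Let n ≥ 1, r ≥ 1, t ≥ 2, and suppose ℓ : V(H_{n,t,r}) → {1,…,k} is a d-lucky labeling of H_{n,t,r}. Then t ≤ k·(n + r) − (n + r) + 1; consequently η_dl(H_{n,t,r}) ≥ ⌈(t + n + r − 1) / (n + r)⌉. -/
import Mathlib


attribute [local instance] Classical.propDecidable

/-- The d-lucky sum of a vertex `u`. -/
noncomputable def dLuckySum {V : Type*} [Fintype V] (G : SimpleGraph V) (ℓ : V → ℕ)
    (u : V) : ℕ :=
  G.degree u + ∑ v ∈ G.neighborFinset u, ℓ v

/-- A labeling is d-lucky if adjacent vertices have distinct d-lucky sums. -/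
def IsDLuckyLabeling {V : Type*} [Fintype V] (G : SimpleGraph V) (ℓ : V → ℕ) : Prop :=
  ∀ ⦃u v : V⦄, G.Adj u v → dLuckySum G ℓ u ≠ dLuckySum G ℓ v

/-- The d-lucky number: the least positive integer `k` such that `G` admits a
d-lucky labeling with labels in `{1, …, k}`. -/
noncomputable def dLuckyNumber {V : Type*} [Fintype V] (G : SimpleGraph V) : ℕ :=
  sInf {k : ℕ | 0 < k ∧ ∃ ℓ : V → ℕ, (∀ v : V, 1 ≤ ℓ v ∧ ℓ v ≤ k) ∧ IsDLuckyLabeling G ℓ}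

/-- Generating relation for `H_{n,t,r}`: `Sum.inl (i, a)` is the vertex `(i,a)` of
the complete `t`-partite graph `H_{n,t}` (partite set `i`, vertex `a`), and
`Sum.inr (i, a, c)` is the pendant vertex `p_{i,a,c}` attached to `(i,a)`. -/
def cocktailRel (n t r : ℕ) :
    (Fin t × Fin n ⊕ Fin t × Fin n × Fin r) → (Fin t × Fin n ⊕ Fin t × Fin n × Fin r) → Prop
  | Sum.inl q, Sum.inl q' => q.1 ≠ q'.1
  | Sum.inl q, Sum.inr p => p.1 = q.1 ∧ p.2.1 = q.2
  | _, _ => False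

/-- The graph `H_{n,t,r} = H_{n,t} ∘ (complement of K_r)`: the complete `t`-partite
graph with parts of size `n`, with `r` pendant vertices attached to each vertex. -/
def cocktailParty (n t r : ℕ) : SimpleGraph (Fin t × Fin n ⊕ Fin t × Fin n × Fin r) :=
  SimpleGraph.fromRel (cocktailRel n t r)

lemma adj_inl_inl (n t r : ℕ) (i j : Fin t) (a b : Fin n) :
    (cocktailParty n t r).Adj (Sum.inl (i, a)) (Sum.inl (j, b)) ↔ i ≠ j := by
  simp only [cocktailParty, SimpleGraph.fromRel_adj, cocktailRel]
  constructor
  · rintro ⟨h1, h2 | h2⟩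
    · exact h2
    · exact h2.symm
  · intro h
    refine ⟨?_, Or.inl h⟩
    intro he
    apply h
    exact congrArg Prod.fst (Sum.inl.inj he)

lemma adj_inl_inr (n t r : ℕ) (i : Fin t) (a : Fin n) (p : Fin t × Fin n × Fin r) :
    (cocktailParty n t r).Adj (Sum.inl (i, a)) (Sum.inr p) ↔ p.1 = i ∧ p.2.1 = a := by
  simp [cocktailParty, SimpleGraph.fromRel_adj, cocktailRel]

lemma neighbor_sum (n t r : ℕ) (f : (Fin t × Fin n ⊕ Fin t × Fin n × Fin r) → ℕ)
    (i : Fin t) (a : Fin n) :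
    (∑ v ∈ (cocktailParty n t r).neighborFinset (Sum.inl (i, a)), f v)
      + ∑ b : Fin n, f (Sum.inl (i, b))
    = (∑ j : Fin t, ∑ b : Fin n, f (Sum.inl (j, b))) + ∑ c : Fin r, f (Sum.inr (i, a, c)) := by
  classical
  rw [SimpleGraph.neighborFinset_eq_filter, Finset.sum_filter, Fintype.sum_sum_type]
  have h1 : (∑ q : Fin t × Fin n, if (cocktailParty n t r).Adj (Sum.inl (i,a)) (Sum.inl q)
      then f (Sum.inl q) else 0)
      = ∑ j ∈ Finset.univ.erase i, ∑ b : Fin n, f (Sum.inl (j, b)) := by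
    have : ∀ q : Fin t × Fin n, (if (cocktailParty n t r).Adj (Sum.inl (i,a)) (Sum.inl q)
        then f (Sum.inl q) else 0) = if i ≠ q.1 then f (Sum.inl q) else 0 := by
      intro q
      exact if_congr (by rw [adj_inl_inl]) rfl rfl
    rw [Finset.sum_congr rfl (fun q _ => this q), Fintype.sum_prod_type]
    have h2 : ∀ j : Fin t, (∑ b : Fin n, if i ≠ j then f (Sum.inl (j, b)) else 0)
        = if i ≠ j then ∑ b : Fin n, f (Sum.inl (j, b)) else 0 := by
      intro j; split <;> simp
    rw [Finset.sum_congr rfl (fun j _ => h2 j), ← Finset.sum_filter, Finset.filter_ne]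
  have h3 : (∑ p : Fin t × Fin n × Fin r, if (cocktailParty n t r).Adj (Sum.inl (i,a)) (Sum.inr p)
      then f (Sum.inr p) else 0) = ∑ c : Fin r, f (Sum.inr (i, a, c)) := by
    have : ∀ p : Fin t × Fin n × Fin r, (if (cocktailParty n t r).Adj (Sum.inl (i,a)) (Sum.inr p)
        then f (Sum.inr p) else 0) = if p.1 = i ∧ p.2.1 = a then f (Sum.inr p) else 0 := by
      intro p
      exact if_congr (by rw [adj_inl_inr]) rfl rfl
    rw [Finset.sum_congr rfl (fun p _ => this p), Fintype.sum_prod_type]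
    simp only [Fintype.sum_prod_type]
    have h4 : ∀ j : Fin t, ∀ b : Fin n,
        (∑ c : Fin r, if j = i ∧ b = a then f (Sum.inr (j, b, c)) else 0)
        = if j = i ∧ b = a then ∑ c : Fin r, f (Sum.inr (j, b, c)) else 0 := by
      intro j b; split <;> simp
    rw [Finset.sum_congr rfl (fun j _ => Finset.sum_congr rfl (fun b _ => h4 j b))]
    have h5 : ∀ j : Fin t,
        (∑ b : Fin n, if j = i ∧ b = a then ∑ c : Fin r, f (Sum.inr (j, b, c)) else 0)
        = if j = i then ∑ c : Fin r, f (Sum.inr (j, a, c)) else 0 := by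
      intro j
      by_cases hj : j = i
      · simp only [hj, true_and]
        rw [Finset.sum_ite_eq' Finset.univ a]
        simp
      · simp [hj]
    rw [Finset.sum_congr rfl (fun j _ => h5 j), Finset.sum_ite_eq' Finset.univ i]
    simp
  rw [h1, h3, add_right_comm, Finset.sum_erase_add]
  exact Finset.mem_univ i

lemma key (n t r : ℕ) (hn : 1 ≤ n) (hr : 1 ≤ r) (ht : 2 ≤ t) (k : ℕ)
    (ℓ : (Fin t × Fin n ⊕ Fin t × Fin n × Fin r) → ℕ)
    (hrange : ∀ v, 1 ≤ ℓ v ∧ ℓ v ≤ k)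
    (hℓ : IsDLuckyLabeling (cocktailParty n t r) ℓ) :
    (t : ℤ) ≤ (k : ℤ) * ((n : ℤ) + (r : ℤ)) - ((n : ℤ) + (r : ℤ)) + 1 := by
  classical
  set a₀ : Fin n := ⟨0, hn⟩ with ha₀
  have hk : 1 ≤ k := le_trans (hrange (Sum.inl (⟨0, by omega⟩, a₀))).1
    (hrange (Sum.inl (⟨0, by omega⟩, a₀))).2
  set S : Fin t → ℕ := fun i => ∑ b : Fin n, ℓ (Sum.inl (i, b)) with hS
  set P : Fin t → ℕ := fun i => ∑ c : Fin r, ℓ (Sum.inr (i, a₀, c)) with hP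
  set T : ℕ := ∑ j : Fin t, S j with hT
  -- degree fact
  have hdeg : ∀ i : Fin t, (cocktailParty n t r).degree (Sum.inl (i, a₀)) + n = t * n + r := by
    intro i
    have h := neighbor_sum n t r (fun _ => 1) i a₀
    simp only [Finset.sum_const, Finset.card_univ, Fintype.card_fin, smul_eq_mul, mul_one] at h
    rw [SimpleGraph.degree]
    exact h
  -- d-lucky sum fact
  have hsum : ∀ i : Fin t,
      (∑ v ∈ (cocktailParty n t r).neighborFinset (Sum.inl (i, a₀)), ℓ v) + S i = T + P i := by
    intro i
    have := neighbor_sum n t r ℓ i a₀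
    simpa [hS, hT, hP] using this
  set F : Fin t → ℤ := fun i => (P i : ℤ) - (S i : ℤ) with hF
  have hinj : Function.Injective F := by
    intro i j hij
    by_contra hne
    have hadj : (cocktailParty n t r).Adj (Sum.inl (i, a₀)) (Sum.inl (j, a₀)) :=
      (adj_inl_inl n t r i j a₀ a₀).mpr hne
    apply hℓ hadj
    have e1 := hsum i
    have e2 := hsum j
    have d1 := hdeg i
    have d2 := hdeg j
    have hFij : (P i : ℤ) - (S i : ℤ) = (P j : ℤ) - (S j : ℤ) := hij
    have : (dLuckySum (cocktailParty n t r) ℓ (Sum.inl (i, a₀)) : ℤ)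
        = (dLuckySum (cocktailParty n t r) ℓ (Sum.inl (j, a₀)) : ℤ) := by
      simp only [dLuckySum]
      push_cast
      have e1' : ((∑ v ∈ (cocktailParty n t r).neighborFinset (Sum.inl (i, a₀)), ℓ v : ℕ) : ℤ)
          + S i = (T : ℤ) + P i := by exact_mod_cast congrArg (Nat.cast : ℕ → ℤ) e1
      have e2' : ((∑ v ∈ (cocktailParty n t r).neighborFinset (Sum.inl (j, a₀)), ℓ v : ℕ) : ℤ)
          + S j = (T : ℤ) + P j := by exact_mod_cast congrArg (Nat.cast : ℕ → ℤ) e2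
      have d1' : ((cocktailParty n t r).degree (Sum.inl (i, a₀)) : ℤ) + n = t * n + r := by
        exact_mod_cast congrArg (Nat.cast : ℕ → ℤ) d1
      have d2' : ((cocktailParty n t r).degree (Sum.inl (j, a₀)) : ℤ) + n = t * n + r := by
        exact_mod_cast congrArg (Nat.cast : ℕ → ℤ) d2
      push_cast at e1' e2'
      linarith
    exact_mod_cast this
  -- bounds
  have hSb : ∀ i : Fin t, (n : ℤ) ≤ S i ∧ (S i : ℤ) ≤ k * n := by
    intro i
    constructor
    · have : n * 1 ≤ S i := by
        rw [hS]
        calc n * 1 = ∑ _b : Fin n, 1 := by simp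
        _ ≤ _ := Finset.sum_le_sum (fun b _ => (hrange _).1)
      exact_mod_cast by linarith [this]
    · have : S i ≤ n * k := by
        rw [hS]
        calc S i ≤ ∑ _b : Fin n, k := Finset.sum_le_sum (fun b _ => (hrange _).2)
        _ = n * k := by simp [mul_comm]
      exact_mod_cast by push_cast; nlinarith [this]
  have hPb : ∀ i : Fin t, (r : ℤ) ≤ P i ∧ (P i : ℤ) ≤ k * r := by
    intro i
    constructor
    · have : r * 1 ≤ P i := by
        rw [hP]
        calc r * 1 = ∑ _c : Fin r, 1 := by simp
        _ ≤ _ := Finset.sum_le_sum (fun c _ => (hrange _).1)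
      exact_mod_cast by linarith [this]
    · have : P i ≤ r * k := by
        rw [hP]
        calc P i ≤ ∑ _c : Fin r, k := Finset.sum_le_sum (fun c _ => (hrange _).2)
        _ = r * k := by simp [mul_comm]
      exact_mod_cast by push_cast; nlinarith [this]
  -- counting
  set lo : ℤ := (r : ℤ) - k * n with hlo
  set hi : ℤ := (k : ℤ) * r - n with hhi
  have hsub : Finset.univ.image F ⊆ Finset.Icc lo hi := by
    intro x hx
    obtain ⟨i, _, rfl⟩ := Finset.mem_image.mp hx
    rw [Finset.mem_Icc]
    obtain ⟨h1, h2⟩ := hSb i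
    obtain ⟨h3, h4⟩ := hPb i
    constructor <;> [skip; skip] <;> simp only [hF, hlo, hhi] <;> linarith
  have hcard : t ≤ (Finset.Icc lo hi).card := by
    calc t = (Finset.univ.image F).card := by
          rw [Finset.card_image_of_injective _ hinj, Finset.card_univ, Fintype.card_fin]
    _ ≤ _ := Finset.card_le_card hsub
  rw [Int.card_Icc] at hcard
  have hnn : (0 : ℤ) ≤ hi + 1 - lo := by
    have : (1 : ℤ) ≤ k := by exact_mod_cast hk
    simp only [hlo, hhi]
    nlinarith [this]
  have : (t : ℤ) ≤ hi + 1 - lo := by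
    calc (t : ℤ) ≤ ((hi + 1 - lo).toNat : ℤ) := by exact_mod_cast hcard
    _ = hi + 1 - lo := Int.toNat_of_nonneg hnn
  simp only [hlo, hhi] at this
  linarith [this]


theorem dLuckyNumber_cocktailParty_lower (n t r : ℕ) (hn : 1 ≤ n) (hr : 1 ≤ r)
    (ht : 2 ≤ t) (k : ℕ) (ℓ : (Fin t × Fin n ⊕ Fin t × Fin n × Fin r) → ℕ)
    (hrange : ∀ v, 1 ≤ ℓ v ∧ ℓ v ≤ k)
    (hℓ : IsDLuckyLabeling (cocktailParty n t r) ℓ) :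
    (t : ℤ) ≤ (k : ℤ) * ((n : ℤ) + (r : ℤ)) - ((n : ℤ) + (r : ℤ)) + 1 ∧
    dLuckyNumber (cocktailParty n t r) ≥
      ⌈((t : ℚ) + (n : ℚ) + (r : ℚ) - 1) / ((n : ℚ) + (r : ℚ))⌉₊ := by
  constructor
  · exact key n t r hn hr ht k ℓ hrange hℓ
  · have hkpos : 0 < k := lt_of_lt_of_le Nat.one_pos
      (le_trans (hrange (Sum.inl (⟨0, by omega⟩, ⟨0, hn⟩))).1
        (hrange (Sum.inl (⟨0, by omega⟩, ⟨0, hn⟩))).2)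
    have hmem : k ∈ {k : ℕ | 0 < k ∧ ∃ ℓ' : (Fin t × Fin n ⊕ Fin t × Fin n × Fin r) → ℕ,
        (∀ v, 1 ≤ ℓ' v ∧ ℓ' v ≤ k) ∧ IsDLuckyLabeling (cocktailParty n t r) ℓ'} :=
      ⟨hkpos, ℓ, hrange, hℓ⟩
    have hmem' := Nat.sInf_mem (⟨k, hmem⟩ : Set.Nonempty _)
    obtain ⟨hpos, ℓ', hrange', hℓ'⟩ := hmem'
    have hZ := key n t r hn hr ht _ ℓ' hrange' hℓ'
    rw [ge_iff_le, Nat.ceil_le]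
    have hden : (0 : ℚ) < (n : ℚ) + (r : ℚ) := by positivity
    rw [div_le_iff₀ hden]
    have hQ : (t : ℚ) ≤ (dLuckyNumber (cocktailParty n t r) : ℚ)
        * ((n : ℚ) + (r : ℚ)) - ((n : ℚ) + (r : ℚ)) + 1 := by
      exact_mod_cast hZ
    linarith
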